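/- Under unconfoundedness, the exposure-mapping pinning condition, and conditionally independent selection (P(D=d | T_i=s, 𝒞_i) factorizes as P(D_{N(i,K)}=d_{N(i,K)} | T_i=s, 𝒞_i) · P(D_{−N(i,K)}=d_{−N(i,K)} | 𝒞_i) for s ∈ {t,t'}), the estimand equals τ(t,t') = τ*(t,t') = (1/m_n) Σ_{i∈ℳ_n} Σ_{d} E[Y_i(d) − Y_i(δ_i, d_{−N(i,K)}) | 𝒞_i] · P(D=d | T_i=t, 𝒞_i); in particular the bias term ℛ_n in the decomposition equals zero. -/
import Mathlib


open Finset
open scoped Classical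

noncomputable section

/-- Probability of event `A` under mass function `p` on a finite space. -/
def prb {Ω : Type*} [Fintype Ω] (p : Ω → ℝ) (A : Ω → Prop) : ℝ :=
  ∑ ω, if A ω then p ω else 0

/-- Unnormalized expectation of `f` on the event `A`. -/
def eiv {Ω : Type*} [Fintype Ω] (p : Ω → ℝ) (f : Ω → ℝ) (A : Ω → Prop) : ℝ :=
  ∑ ω, if A ω then p ω * f ω else 0

/-- Expectation of `f`. -/
def expv {Ω : Type*} [Fintype Ω] (p : Ω → ℝ) (f : Ω → ℝ) : ℝ := ∑ ω, p ω * f ω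

/-- Conditional expectation of `f` given the event `A`. -/
def cexp {Ω : Type*} [Fintype Ω] (p : Ω → ℝ) (f : Ω → ℝ) (A : Ω → Prop) : ℝ :=
  eiv p f A / prb p A

/-- Conditional probability of `A` given `B`. -/
def cpr {Ω : Type*} [Fintype Ω] (p : Ω → ℝ) (A B : Ω → Prop) : ℝ :=
  prb p (fun ω => A ω ∧ B ω) / prb p B

/-- Real value of a boolean treatment. -/
def bR : Bool → ℝ := fun x => if x then 1 else 0

section Framework

variable {Ω : Type*} [Fintype Ω] {n : ℕ} {E : Type*}

/-- The assignment vector equal to `δ i` on the `K`-neighborhood `N i` and to `d` outside it: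
`(δᵢ, d₋N(i,K))`. -/
def pin (N : Fin n → Finset (Fin n)) (δ : Fin n → Fin n → Bool) (i : Fin n)
    (d : Fin n → Bool) : Fin n → Bool :=
  fun j => if j ∈ N i then δ i j else d j

/-- The exposure-mapping estimand
`τ(t,t') = (1/mₙ) Σ_{i∈ℳₙ} (E[Yᵢ | Tᵢ = t, 𝒞ᵢ] − E[Yᵢ | Tᵢ = t', 𝒞ᵢ])`,
where `Tᵢ = f(i, D)` and the event `C i` is the conditioning value of the controls `𝒞ᵢ`. -/
def tauE (p : Ω → ℝ) (Y : Fin n → (Fin n → Bool) → Ω → ℝ) (D : Ω → Fin n → Bool)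
    (C : Fin n → Ω → Prop) (f : Fin n → (Fin n → Bool) → E) (M : Finset (Fin n))
    (t t' : E) : ℝ :=
  (M.card : ℝ)⁻¹ * ∑ i ∈ M,
    (cexp p (fun ω => Y i (D ω) ω) (fun ω => f i (D ω) = t ∧ C i ω) -
     cexp p (fun ω => Y i (D ω) ω) (fun ω => f i (D ω) = t' ∧ C i ω))

/-- `τ*(t,t') = (1/mₙ) Σ_{i∈ℳₙ} Σ_d E[Yᵢ(d) − Yᵢ(δᵢ, d₋N(i,K)) | 𝒞ᵢ] · P(D = d | Tᵢ = t, 𝒞ᵢ)`. -/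
def tauStarE (p : Ω → ℝ) (Y : Fin n → (Fin n → Bool) → Ω → ℝ) (D : Ω → Fin n → Bool)
    (C : Fin n → Ω → Prop) (f : Fin n → (Fin n → Bool) → E) (M : Finset (Fin n))
    (N : Fin n → Finset (Fin n)) (δ : Fin n → Fin n → Bool) (t : E) : ℝ :=
  (M.card : ℝ)⁻¹ * ∑ i ∈ M, ∑ d : Fin n → Bool,
    cexp p (fun ω => Y i d ω - Y i (pin N δ i d) ω) (C i) *
      cpr p (fun ω => D ω = d) (fun ω => f i (D ω) = t ∧ C i ω)

/-- The bias term
`ℛₙ = (1/mₙ) Σ_{i∈ℳₙ} Σ_d E[Yᵢ(δᵢ, d₋N(i,K)) | 𝒞ᵢ] (P(D=d | Tᵢ=t, 𝒞ᵢ) − P(D=d | Tᵢ=t', 𝒞ᵢ))`. -/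
def RnE (p : Ω → ℝ) (Y : Fin n → (Fin n → Bool) → Ω → ℝ) (D : Ω → Fin n → Bool)
    (C : Fin n → Ω → Prop) (f : Fin n → (Fin n → Bool) → E) (M : Finset (Fin n))
    (N : Fin n → Finset (Fin n)) (δ : Fin n → Fin n → Bool) (t t' : E) : ℝ :=
  (M.card : ℝ)⁻¹ * ∑ i ∈ M, ∑ d : Fin n → Bool,
    cexp p (fun ω => Y i (pin N δ i d) ω) (C i) *
      (cpr p (fun ω => D ω = d) (fun ω => f i (D ω) = t ∧ C i ω) -
       cpr p (fun ω => D ω = d) (fun ω => f i (D ω) = t' ∧ C i ω))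

end Framework

section Aux

variable {Ω : Type*} [Fintype Ω] {n : ℕ} {E : Type*}

lemma prb_congr (p : Ω → ℝ) {A B : Ω → Prop} (h : ∀ ω, A ω ↔ B ω) :
    prb p A = prb p B := by
  unfold prb
  exact Finset.sum_congr rfl fun ω _ => by rw [if_congr (h ω) rfl rfl]

lemma eiv_congr (p : Ω → ℝ) (f : Ω → ℝ) {A B : Ω → Prop} (h : ∀ ω, A ω ↔ B ω) :
    eiv p f A = eiv p f B := by
  unfold eiv
  exact Finset.sum_congr rfl fun ω _ => by rw [if_congr (h ω) rfl rfl]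

lemma prb_false (p : Ω → ℝ) {A : Ω → Prop} (h : ∀ ω, ¬ A ω) : prb p A = 0 := by
  unfold prb
  exact Finset.sum_eq_zero fun ω _ => if_neg (h ω)

lemma eiv_false (p : Ω → ℝ) (f : Ω → ℝ) {A : Ω → Prop} (h : ∀ ω, ¬ A ω) :
    eiv p f A = 0 := by
  unfold eiv
  exact Finset.sum_eq_zero fun ω _ => if_neg (h ω)

lemma cpr_congr (p : Ω → ℝ) {A A' : Ω → Prop} (B : Ω → Prop) (h : ∀ ω, A ω ↔ A' ω) :
    cpr p A B = cpr p A' B := by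
  unfold cpr
  rw [prb_congr p (A := fun ω => A ω ∧ B ω) (B := fun ω => A' ω ∧ B ω)
    (fun ω => and_congr_left' (h ω))]

lemma eiv_sub (p : Ω → ℝ) (f g : Ω → ℝ) (A : Ω → Prop) :
    eiv p (fun ω => f ω - g ω) A = eiv p f A - eiv p g A := by
  unfold eiv
  rw [← Finset.sum_sub_distrib]
  refine Finset.sum_congr rfl fun ω _ => ?_
  split_ifs <;> ring

lemma cexp_sub (p : Ω → ℝ) (f g : Ω → ℝ) (A : Ω → Prop) :
    cexp p (fun ω => f ω - g ω) A = cexp p f A - cexp p g A := by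
  unfold cexp
  rw [eiv_sub, sub_div]

/-- Decomposition of `eiv` of `Y (D ω) ω` over the possible values of `D`. -/
lemma eiv_decomp (p : Ω → ℝ) (Y : (Fin n → Bool) → Ω → ℝ) (D : Ω → Fin n → Bool)
    (A : Ω → Prop) :
    eiv p (fun ω => Y (D ω) ω) A
      = ∑ d : Fin n → Bool, eiv p (Y d) (fun ω => D ω = d ∧ A ω) := by
  unfold eiv
  refine Eq.symm ?_
  rw [Finset.sum_comm]
  refine Finset.sum_congr rfl fun ω _ => ?_
  by_cases h : A ω
  · simp only [h, and_true]
    rw [Finset.sum_ite_eq]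
    simp
  · simp [h]

/-- Partition of a fiber of `pin` over the values of `D` on the neighborhood. -/
lemma fiber_sum (p : Ω → ℝ) (D : Ω → Fin n → Bool) (B : Ω → Prop)
    (N : Fin n → Finset (Fin n)) (δ : Fin n → Fin n → Bool) (i : Fin n)
    (e : Fin n → Bool) (he : ∀ j ∈ N i, e j = δ i j) :
    ∑ d ∈ Finset.univ.filter (fun d => pin N δ i d = e),
      prb p (fun ω => (∀ j ∈ N i, D ω j = d j) ∧ B ω) = prb p B := by
  unfold prb
  rw [Finset.sum_comm]
  refine Finset.sum_congr rfl fun ω _ => ?_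
  by_cases hB : B ω
  · simp only [hB, and_true]
    set m : Fin n → Bool := fun j => if j ∈ N i then D ω j else e j with hm
    have hmem : m ∈ Finset.univ.filter (fun d => pin N δ i d = e) := by
      simp only [Finset.mem_filter, Finset.mem_univ, true_and]
      funext j
      by_cases hj : j ∈ N i
      · simp [pin, hj, he j hj]
      · simp [pin, hj, m]
    rw [Finset.sum_eq_single_of_mem m hmem]
    · rw [if_pos, if_pos trivial]
      intro j hj; simp [m, hj]
    · intro d hd hne
      rw [if_neg]
      intro hAll
      apply hne
      funext j
      by_cases hj : j ∈ N i
      · rw [← hAll j hj]; simp [m, hj]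
      · have hpd := (Finset.mem_filter.mp hd).2
        have hde : d j = e j := by
          rw [← hpd]; simp [pin, hj]
        simp [m, hj, hde]
  · simp [hB]

lemma fiber_cpr_sum (p : Ω → ℝ) (D : Ω → Fin n → Bool) (B : Ω → Prop)
    (N : Fin n → Finset (Fin n)) (δ : Fin n → Fin n → Bool) (i : Fin n)
    (e : Fin n → Bool) (he : ∀ j ∈ N i, e j = δ i j) (hB : prb p B ≠ 0) :
    ∑ d ∈ Finset.univ.filter (fun d => pin N δ i d = e),
      cpr p (fun ω => ∀ j ∈ N i, D ω j = d j) B = 1 := by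
  unfold cpr
  rw [← Finset.sum_div, fiber_sum p D B N δ i e he, div_self hB]

/-- Key factorization: the sum `∑ d, G (pin d) · P(D = d | B)` depends on `B`
only through the factorization hypothesis. -/
lemma sum_pin_cpr (p : Ω → ℝ) (D : Ω → Fin n → Bool) (B Ci : Ω → Prop)
    (N : Fin n → Finset (Fin n)) (δ : Fin n → Fin n → Bool) (i : Fin n)
    (G : (Fin n → Bool) → ℝ) (hB : prb p B ≠ 0)
    (hfac : ∀ d : Fin n → Bool,
      cpr p (fun ω => D ω = d) B =
        cpr p (fun ω => ∀ j ∈ N i, D ω j = d j) B *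
          cpr p (fun ω => ∀ j ∉ N i, D ω j = d j) Ci) :
    ∑ d : Fin n → Bool, G (pin N δ i d) * cpr p (fun ω => D ω = d) B
      = ∑ e ∈ Finset.univ.image (pin N δ i),
          G e * cpr p (fun ω => ∀ j ∉ N i, D ω j = e j) Ci := by
  rw [← Finset.sum_fiberwise_of_maps_to
    (g := pin N δ i) (t := Finset.univ.image (pin N δ i))
    (fun d _ => Finset.mem_image_of_mem _ (Finset.mem_univ d))
    (fun d => G (pin N δ i d) * cpr p (fun ω => D ω = d) B)]
  refine Finset.sum_congr rfl fun e he => ?_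
  have hepin : ∀ j ∈ N i, e j = δ i j := by
    obtain ⟨d, -, rfl⟩ := Finset.mem_image.mp he
    intro j hj; simp [pin, hj]
  have hstep : ∀ d ∈ Finset.univ.filter (fun d => pin N δ i d = e),
      G (pin N δ i d) * cpr p (fun ω => D ω = d) B
        = (G e * cpr p (fun ω => ∀ j ∉ N i, D ω j = e j) Ci) *
            cpr p (fun ω => ∀ j ∈ N i, D ω j = d j) B := by
    intro d hd
    have hpd : pin N δ i d = e := (Finset.mem_filter.mp hd).2
    have hout : ∀ j ∉ N i, d j = e j := by
      intro j hj; rw [← hpd]; simp [pin, hj]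
    have hcout : cpr p (fun ω => ∀ j ∉ N i, D ω j = d j) Ci
        = cpr p (fun ω => ∀ j ∉ N i, D ω j = e j) Ci := by
      refine cpr_congr p Ci fun ω => ?_
      constructor
      · intro h j hj; rw [← hout j hj]; exact h j hj
      · intro h j hj; rw [hout j hj]; exact h j hj
    rw [hfac d, hpd, hcout]; ring
  rw [Finset.sum_congr rfl hstep, ← Finset.mul_sum,
    fiber_cpr_sum p D B N δ i e hepin hB, mul_one]

/-- Unconfoundedness plus exposure mapping: conditional expectation decomposition. -/
lemma cexp_decomp (p : Ω → ℝ) (Yi : (Fin n → Bool) → Ω → ℝ) (D : Ω → Fin n → Bool)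
    (Ci : Ω → Prop) (fi : (Fin n → Bool) → E) (s : E)
    (hC : 0 < prb p Ci)
    (hunc : ∀ d : Fin n → Bool,
      eiv p (Yi d) (fun ω => D ω = d ∧ Ci ω) * prb p Ci =
        eiv p (Yi d) Ci * prb p (fun ω => D ω = d ∧ Ci ω)) :
    cexp p (fun ω => Yi (D ω) ω) (fun ω => fi (D ω) = s ∧ Ci ω)
      = ∑ d : Fin n → Bool, cexp p (Yi d) Ci *
          cpr p (fun ω => D ω = d) (fun ω => fi (D ω) = s ∧ Ci ω) := by
  set B : Ω → Prop := fun ω => fi (D ω) = s ∧ Ci ω with hBdef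
  have step : ∀ d : Fin n → Bool, eiv p (Yi d) (fun ω => D ω = d ∧ B ω)
      = cexp p (Yi d) Ci * prb p (fun ω => D ω = d ∧ B ω) := by
    intro d
    by_cases hd : fi d = s
    · have hiff : ∀ ω, (D ω = d ∧ B ω) ↔ (D ω = d ∧ Ci ω) := by
        intro ω
        constructor
        · rintro ⟨h1, _, h3⟩; exact ⟨h1, h3⟩
        · rintro ⟨h1, h2⟩; exact ⟨h1, by rw [h1]; exact hd, h2⟩
      rw [eiv_congr p (Yi d) hiff, prb_congr p hiff, cexp,
        div_mul_eq_mul_div, eq_comm, div_eq_iff hC.ne']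
      exact (hunc d).symm
    · have hiff : ∀ ω, ¬ (D ω = d ∧ B ω) := by
        rintro ω ⟨h1, h2, -⟩
        exact hd (by rw [← h1]; exact h2)
      rw [eiv_false p (Yi d) hiff, prb_false p hiff, mul_zero]
  show eiv p (fun ω => Yi (D ω) ω) B / prb p B = _
  rw [eiv_decomp p Yi D B, Finset.sum_congr rfl (fun d _ => step d), Finset.sum_div]
  exact Finset.sum_congr rfl fun d _ => mul_div_assoc _ _ _

end Aux

/-- Theorem 1: under unconfoundedness, the pinning condition, and
conditionally independent selection, `τ(t,t') = τ*(t,t')` and the bias `ℛₙ` is zero. -/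
theorem stmt4 {Ω : Type*} [Fintype Ω] {n : ℕ} {E : Type*}
    (p : Ω → ℝ) (hp : ∀ ω, 0 ≤ p ω) (hp1 : ∑ ω, p ω = 1)
    (Y : Fin n → (Fin n → Bool) → Ω → ℝ) (D : Ω → Fin n → Bool)
    (C : Fin n → Ω → Prop) (N : Fin n → Finset (Fin n))
    (f : Fin n → (Fin n → Bool) → E) (M : Finset (Fin n))
    (t t' : E) (δ : Fin n → Fin n → Bool)
    (hf : ∀ (i : Fin n) (d d' : Fin n → Bool), (∀ j ∈ N i, d j = d' j) → f i d = f i d')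
    (hpin : ∀ (i : Fin n) (d : Fin n → Bool), f i d = t' → ∀ j ∈ N i, d j = δ i j)
    (hunc : ∀ (i : Fin n) (d dvec : Fin n → Bool),
      eiv p (fun ω => Y i d ω) (fun ω => D ω = dvec ∧ C i ω) * prb p (C i) =
        eiv p (fun ω => Y i d ω) (C i) * prb p (fun ω => D ω = dvec ∧ C i ω))
    (hC : ∀ i ∈ M, 0 < prb p (C i))
    (hposT : ∀ i ∈ M, 0 < prb p (fun ω => f i (D ω) = t ∧ C i ω))
    (hposT' : ∀ i ∈ M, 0 < prb p (fun ω => f i (D ω) = t' ∧ C i ω))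
    -- Assumption 3 (CI Selection): conditional on `Tᵢ = s` and the controls, the assignment
    -- probability factorizes into the `N(i,K)`-subvector part and the rest
    (hcis : ∀ i ∈ M, ∀ (d : Fin n → Bool), ∀ s ∈ ({t, t'} : Set E),
      cpr p (fun ω => D ω = d) (fun ω => f i (D ω) = s ∧ C i ω) =
        cpr p (fun ω => ∀ j ∈ N i, D ω j = d j) (fun ω => f i (D ω) = s ∧ C i ω) *
          cpr p (fun ω => ∀ j ∉ N i, D ω j = d j) (C i)) :
    tauE p Y D C f M t t' = tauStarE p Y D C f M N δ t ∧
      RnE p Y D C f M N δ t t' = 0 := by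
  classical
  -- Abbreviations per unit
  set g : Fin n → (Fin n → Bool) → ℝ := fun i d => cexp p (Y i d) (C i) with hg
  set q : Fin n → E → (Fin n → Bool) → ℝ := fun i s d =>
    cpr p (fun ω => D ω = d) (fun ω => f i (D ω) = s ∧ C i ω) with hq
  -- the two applications of the factorization lemma coincide
  have hsame : ∀ i ∈ M,
      ∑ d : Fin n → Bool, g i (pin N δ i d) * q i t d
        = ∑ d : Fin n → Bool, g i (pin N δ i d) * q i t' d := by
    intro i hi
    rw [sum_pin_cpr p D _ (C i) N δ i (g i) (hposT i hi).ne'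
        (fun d => hcis i hi d t (Set.mem_insert t {t'})),
      sum_pin_cpr p D _ (C i) N δ i (g i) (hposT' i hi).ne'
        (fun d => hcis i hi d t' (Set.mem_insert_iff.mpr (Or.inr rfl)))]
  -- on the event `T = t'`, the assignment is pinned
  have hpinned : ∀ (i : Fin n) (d : Fin n → Bool),
      g i d * q i t' d = g i (pin N δ i d) * q i t' d := by
    intro i d
    by_cases hd : f i d = t'
    · have : pin N δ i d = d := by
        funext j
        by_cases hj : j ∈ N i
        · simp [pin, hj, (hpin i d hd j hj).symm]
        · simp [pin, hj]
      rw [this]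
    · have hz : q i t' d = 0 := by
        have : prb p (fun ω => D ω = d ∧ (f i (D ω) = t' ∧ C i ω)) = 0 := by
          refine prb_false p ?_
          rintro ω ⟨h1, h2, -⟩
          exact hd (by rw [← h1]; exact h2)
        simp only [hq, cpr, this, zero_div]
      rw [hz, mul_zero, mul_zero]
  -- the per-unit decomposition
  have hdec : ∀ i ∈ M, ∀ s : E,
      cexp p (fun ω => Y i (D ω) ω) (fun ω => f i (D ω) = s ∧ C i ω)
        = ∑ d : Fin n → Bool, g i d * q i s d := by
    intro i hi s
    exact cexp_decomp p (Y i) D (C i) (f i) s (hC i hi) (fun d => hunc i d d)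
  have hRn : ∀ i ∈ M, (∑ d : Fin n → Bool,
      cexp p (fun ω => Y i (pin N δ i d) ω) (C i) * (q i t d - q i t' d)) = 0 := by
    intro i hi
    have : ∀ d : Fin n → Bool,
        cexp p (fun ω => Y i (pin N δ i d) ω) (C i) * (q i t d - q i t' d)
          = g i (pin N δ i d) * q i t d - g i (pin N δ i d) * q i t' d := by
      intro d; rw [mul_sub]
    rw [Finset.sum_congr rfl (fun d _ => this d), Finset.sum_sub_distrib,
      hsame i hi, sub_self]
  constructor
  · unfold tauE tauStarE
    congr 1
    refine Finset.sum_congr rfl fun i hi => ?_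
    have hsub : ∀ d : Fin n → Bool,
        cexp p (fun ω => Y i d ω - Y i (pin N δ i d) ω) (C i) * q i t d
          = g i d * q i t d - g i (pin N δ i d) * q i t d := by
      intro d
      rw [cexp_sub p (fun ω => Y i d ω) (fun ω => Y i (pin N δ i d) ω) (C i), sub_mul]
    calc cexp p (fun ω => Y i (D ω) ω) (fun ω => f i (D ω) = t ∧ C i ω) -
          cexp p (fun ω => Y i (D ω) ω) (fun ω => f i (D ω) = t' ∧ C i ω)
        = (∑ d : Fin n → Bool, g i d * q i t d)
            - ∑ d : Fin n → Bool, g i d * q i t' d := by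
          rw [hdec i hi t, hdec i hi t']
      _ = (∑ d : Fin n → Bool, g i d * q i t d)
            - ∑ d : Fin n → Bool, g i (pin N δ i d) * q i t' d := by
          rw [Finset.sum_congr rfl (fun d _ => hpinned i d)]
      _ = (∑ d : Fin n → Bool, g i d * q i t d)
            - ∑ d : Fin n → Bool, g i (pin N δ i d) * q i t d := by
          rw [hsame i hi]
      _ = ∑ d : Fin n → Bool,
            cexp p (fun ω => Y i d ω - Y i (pin N δ i d) ω) (C i) * q i t d := by
          rw [Finset.sum_congr rfl (fun d _ => hsub d), Finset.sum_sub_distrib]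
  · unfold RnE
    rw [Finset.sum_congr rfl hRn, Finset.sum_const, smul_zero, mul_zero]
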